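/- Let d ∈ ℕ, m ≥ 1 a natural number, U ∈ [0,1] and c ∈ (0,1) and s > 0 real numbers, and let q, x, y ∈ ℝ^d with ‖q‖₂ = 1, ‖x‖₂ ≤ U, ‖y‖₂ ≤ U, ⟨q, x⟩ ≥ s and ⟨q, y⟩ ≤ c·s. If c² · U^{2^{m+1}} < (1 − c²) · m/4, then the transformed query strictly prefers x over y in cosine similarity: ⟨Q(q), P(x)⟩ / ‖P(x)‖₂ > ⟨Q(q), P(y)⟩ / ‖P(y)‖₂. -/

import Mathlib

open scoped RealInnerProductSpace

/-- The preprocessing transformation P : ℝ^d → ℝ^{d+m},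
P(x) = [x; 1/2 − ‖x‖₂^{2^1}; 1/2 − ‖x‖₂^{2^2}; …; 1/2 − ‖x‖₂^{2^m}]. -/
noncomputable def preprocess (d m : ℕ) (x : EuclideanSpace ℝ (Fin d)) :
    EuclideanSpace ℝ (Fin (d + m)) :=
  WithLp.toLp 2 fun i => if h : (i : ℕ) < d then x ⟨i, h⟩
    else 1 / 2 - ‖x‖ ^ (2 ^ ((i : ℕ) - d + 1))

/-- The query transformation Q : ℝ^d → ℝ^{d+m}, Q(x) = [x; 0; …; 0]. -/
noncomputable def query (d m : ℕ) (x : EuclideanSpace ℝ (Fin d)) :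
    EuclideanSpace ℝ (Fin (d + m)) :=
  WithLp.toLp 2 fun i => if h : (i : ℕ) < d then x ⟨i, h⟩ else 0

/-! Q(q) only sees the first d coordinates of P(v), so ⟪Q q, P v⟫ = ⟪q, v⟫. The appended
coordinates telescope: (1/2 − t^{2^j})² = 1/4 + t^{2^{j+1}} − t^{2^j}, whence
‖P v‖² = m/4 + ‖v‖^{2^{m+1}}. The separation hypothesis then gives c‖P x‖ < ‖P y‖, and
⟪q, y⟫ ‖P x‖ ≤ c s ‖P x‖ < s ‖P y‖ ≤ ⟪q, x⟫ ‖P y‖. -/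

lemma inner_query_preprocess (d m : ℕ) (q v : EuclideanSpace ℝ (Fin d)) :
    ⟪query d m q, preprocess d m v⟫ = ⟪q, v⟫ := by
  simp [PiLp.inner_apply, query, preprocess, Fin.sum_univ_add]

lemma sum_range_sq_half_sub_pow_two_pow (m : ℕ) (t : ℝ) :
    ∑ j ∈ Finset.range m, (1 / 2 - t ^ 2 ^ (j + 1)) ^ 2 = m / 4 + t ^ 2 ^ (m + 1) - t ^ 2 := by
  have hterm (j : ℕ) :
      (1 / 2 - t ^ 2 ^ (j + 1)) ^ 2 = 1 / 4 + (t ^ 2 ^ (j + 2) - t ^ 2 ^ (j + 1)) := by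
    rw [pow_succ 2 (j + 1), pow_mul]; ring
  simp only [hterm, Finset.sum_add_distrib, Finset.sum_range_sub (fun j => t ^ 2 ^ (j + 1))]
  simp only [Finset.sum_const, Finset.card_range, nsmul_eq_mul, zero_add, pow_one]
  ring

lemma norm_sq_preprocess (d m : ℕ) (v : EuclideanSpace ℝ (Fin d)) :
    ‖preprocess d m v‖ ^ 2 = m / 4 + ‖v‖ ^ 2 ^ (m + 1) := by
  rw [EuclideanSpace.norm_sq_eq, Fin.sum_univ_add]
  simp only [preprocess, Fin.val_castAdd, Fin.is_lt, dite_true, Fin.val_natAdd,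
    add_lt_iff_neg_left, Nat.not_lt_zero, dite_false, add_tsub_cancel_left, Fin.eta]
  rw [← EuclideanSpace.norm_sq_eq,
    Fin.sum_univ_eq_sum_range (fun j => ‖1 / 2 - ‖v‖ ^ 2 ^ (j + 1)‖ ^ 2)]
  simp only [Real.norm_eq_abs, sq_abs, sum_range_sq_half_sub_pow_two_pow]
  ring

lemma norm_preprocess_pos {d m : ℕ} (hm : 1 ≤ m) (v : EuclideanSpace ℝ (Fin d)) :
    0 < ‖preprocess d m v‖ := by
  refine lt_of_pow_lt_pow_left₀ 2 (norm_nonneg _) ?_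
  rw [norm_sq_preprocess, zero_pow two_ne_zero]
  have : (0 : ℝ) < m := by exact_mod_cast hm
  positivity

lemma mul_norm_preprocess_lt_norm_preprocess {d m : ℕ} {U c : ℝ} {x : EuclideanSpace ℝ (Fin d)}
    (hx : ‖x‖ ≤ U) (hsep : c ^ 2 * U ^ 2 ^ (m + 1) < (1 - c ^ 2) * (m / 4))
    (y : EuclideanSpace ℝ (Fin d)) :
    c * ‖preprocess d m x‖ < ‖preprocess d m y‖ := by
  refine lt_of_pow_lt_pow_left₀ 2 (norm_nonneg _) ?_
  have hxU : ‖x‖ ^ 2 ^ (m + 1) ≤ U ^ 2 ^ (m + 1) := by gcongr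
  have hy : 0 ≤ ‖y‖ ^ 2 ^ (m + 1) := by positivity
  rw [mul_pow, norm_sq_preprocess, norm_sq_preprocess]
  nlinarith [mul_le_mul_of_nonneg_left hxU (sq_nonneg c)]

lemma div_lt_div_of_separated {a b s c M N : ℝ} (hs : 0 < s) (hM : 0 < M) (hN : 0 < N)
    (hcM : c * M < N) (ha : s ≤ a) (hb : b ≤ c * s) : b / N < a / M := by
  rw [div_lt_div_iff₀ hN hM]
  calc b * M ≤ c * s * M := by gcongr
    _ = s * (c * M) := by ring
    _ < s * N := by gcongr
    _ ≤ a * N := by gcongr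

theorem mips_to_cosine_separation_general (d m : ℕ) (hm : 1 ≤ m)
    (U : ℝ)
    (c : ℝ) (s : ℝ) (hs : 0 < s)
    (q x y : EuclideanSpace ℝ (Fin d))
    (hx : ‖x‖ ≤ U)
    (hqx : s ≤ ⟪q, x⟫) (hqy : ⟪q, y⟫ ≤ c * s)
    (hsep : c ^ 2 * U ^ (2 ^ (m + 1)) < (1 - c ^ 2) * ((m : ℝ) / 4)) :
    ⟪query d m q, preprocess d m y⟫ / ‖preprocess d m y‖ <
      ⟪query d m q, preprocess d m x⟫ / ‖preprocess d m x‖ := by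
  rw [inner_query_preprocess, inner_query_preprocess]
  exact div_lt_div_of_separated hs (norm_preprocess_pos hm x) (norm_preprocess_pos hm y)
    (mul_norm_preprocess_lt_norm_preprocess hx hsep y) hqx hqy

/-- the asymmetric MIPS-to-cosine reduction separates a point x
with ⟨q,x⟩ ≥ s from a point y with ⟨q,y⟩ ≤ c·s provided
c² · U^{2^{m+1}} < (1 − c²) · m/4. -/
theorem mips_to_cosine_separation (d m : ℕ) (hm : 1 ≤ m)
    (U : ℝ) (hU : U ∈ Set.Icc (0 : ℝ) 1)
    (c : ℝ) (hc : c ∈ Set.Ioo (0 : ℝ) 1) (s : ℝ) (hs : 0 < s)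
    (q x y : EuclideanSpace ℝ (Fin d)) (hq : ‖q‖ = 1)
    (hx : ‖x‖ ≤ U) (hy : ‖y‖ ≤ U)
    (hqx : s ≤ ⟪q, x⟫) (hqy : ⟪q, y⟫ ≤ c * s)
    (hsep : c ^ 2 * U ^ (2 ^ (m + 1)) < (1 - c ^ 2) * ((m : ℝ) / 4)) :
    ⟪query d m q, preprocess d m y⟫ / ‖preprocess d m y‖ <
      ⟪query d m q, preprocess d m x⟫ / ‖preprocess d m x‖ :=
  mips_to_cosine_separation_general d m hm U c s hs q x y hx hqx hqy hsep
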